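/- arXiv:2012.06668 — 5 statements merged into one kernel-verified Lean document; each statement's English description precedes it below -/
import Mathlib

section
/- Let X be a Hausdorff space. If Y is a π_V-network of X, then the collection {⟨⋂ⱼ (X ∖ Vⱼ), V₁,…,Vₙ⟩ : ⟨V₁,…,Vₙ⟩ ∈ Y} is a π_{𝔽(X),F}-network of X. -/
/-- `Y` is a `π_V`-network of `X`: a collection of (finite) tuples of open sets, such that
for every proper open `U` there is a tuple `⟨V₁, …, Vₙ⟩ ∈ Y` and a finite `F ⊆ X` with
`F ∩ Vⱼ ≠ ∅` for each `j`, `⋂ⱼ (X ∖ Vⱼ) ⊆ U`, and `F ∩ U = ∅`. -/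
def IsPiVNetwork {X : Type*} [TopologicalSpace X] (Y : Set (List (Set X))) : Prop :=
  (∀ l ∈ Y, ∀ V ∈ l, IsOpen V) ∧
  ∀ U : Set X, IsOpen U → U ≠ Set.univ →
    ∃ l ∈ Y, ∃ F : Set X, F.Finite ∧ (∀ V ∈ l, (F ∩ V).Nonempty) ∧
      (⋂ V ∈ l, Vᶜ) ⊆ U ∧ F ∩ U = ∅

/-- The `π_{𝔽(X),F}`-network condition for a collection of tuples `⟨A, V₁, …, Vₙ⟩`,
encoded as pairs of a set and a list of sets. -/
def IsPiFNetwork {X : Type*} [TopologicalSpace X] (Z : Set (Set X × List (Set X))) : Prop :=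
  ∀ U : Set X, IsOpen U → U ≠ Set.univ →
    ∃ p ∈ Z, ∃ F : Set X, F.Finite ∧ (∀ V ∈ p.2, (F ∩ V).Nonempty) ∧
      p.1 ⊆ U ∧ F ∩ U = ∅

theorem piVNetwork_to_piFNetwork {X : Type*} [TopologicalSpace X] [T2Space X]
    (Y : Set (List (Set X))) (hY : IsPiVNetwork Y) :
    (∀ p ∈ {q : Set X × List (Set X) | ∃ l ∈ Y, q = ((⋂ V ∈ l, Vᶜ), l)}, IsClosed p.1) ∧
    IsPiFNetwork {q : Set X × List (Set X) | ∃ l ∈ Y, q = ((⋂ V ∈ l, Vᶜ), l)} := by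
  obtain ⟨hopen, hnet⟩ := hY
  constructor
  · rintro p ⟨l, hl, rfl⟩
    exact isClosed_biInter fun V hV => (hopen l hl V hV).isClosed_compl
  · intro U hU hUne
    obtain ⟨l, hl, F, hF, h1, h2, h3⟩ := hnet U hU hUne
    exact ⟨((⋂ V ∈ l, Vᶜ), l), ⟨l, hl, rfl⟩, F, hF, h1, h2, h3⟩
end

section
/- The family U = ⋃ₙ Uₙ, where Uₙ = {((j−1)/2ⁿ, (j+1)/2ⁿ) : −3ⁿ < j < 3ⁿ}, is an open cover of ℝ which is weakly ω-groupable with respect to the ideal of finite sets but is not an ω-cover: no single member of U contains the two-point set {−1, 1}, yet the interval (−(3/2)ⁿ, (3/2)ⁿ) is contained in ⋃Uₙ for every n. -/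
open Set Function

/-- The family `Uₙ = {((j−1)/2ⁿ, (j+1)/2ⁿ) : −3ⁿ < j < 3ⁿ}` of open intervals. -/
def Ulevel (n : ℕ) : Set (Set ℝ) :=
  {S | ∃ j : ℤ, -(3 : ℤ) ^ n < j ∧ j < 3 ^ n ∧
    S = Set.Ioo (((j : ℝ) - 1) / 2 ^ n) (((j : ℝ) + 1) / 2 ^ n)}

/-- The family `U = ⋃ₙ Uₙ`. -/
def Ufam : Set (Set ℝ) := ⋃ n : ℕ, Ulevel n

/-!
The intervals of `Uₙ` have length `2/2ⁿ`, so distinct levels share no member, and no member of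
`U` (all of length at most `2`) contains both `-1` and `1`. On the other hand `Uₙ`
covers `(-(3/2)ⁿ, (3/2)ⁿ)` (scale by `2ⁿ` and round towards zero), which swallows any given finite set once `n` is large; grouping `U`
by levels therefore witnesses weak ω-groupability.
-/

theorem exists_finite_grouping_of_iUnion {α : Type*} (V : ℕ → Set (Set α))
    (hfin : ∀ n, (V n).Finite) (hdisj : Pairwise (Disjoint on V))
    (hcov : ∀ F : Set α, F.Finite → ∃ k, F ⊆ ⋃₀ V k) :
    ∃ φ : {S // S ∈ ⋃ n, V n} → ℕ,
      (∀ k, {S : {S // S ∈ ⋃ n, V n} | φ S = k}.Finite) ∧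
      ∀ F : Set α, F.Finite → ∃ k, F ⊆ ⋃₀ (Subtype.val '' {S | φ S = k}) := by
  let φ : {S // S ∈ ⋃ n, V n} → ℕ := fun S => (mem_iUnion.1 S.2).choose
  have hφ : ∀ S, S.1 ∈ V (φ S) := fun S => (mem_iUnion.1 S.2).choose_spec
  refine ⟨φ, fun k => ?_, fun F hF => ?_⟩
  · refine ((hfin k).preimage Subtype.val_injective.injOn).subset ?_
    rintro S rfl
    exact hφ S
  · obtain ⟨k, hk⟩ := hcov F hF
    refine ⟨k, fun x hx => ?_⟩
    obtain ⟨S, hS, hxS⟩ := hk hx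
    let S' : {S // S ∈ ⋃ n, V n} := ⟨S, mem_iUnion.2 ⟨k, hS⟩⟩
    have hlevel : φ S' = k :=
      hdisj.eq (not_disjoint_iff.2 ⟨S, hφ S', hS⟩)
    exact ⟨S, ⟨S', hlevel, rfl⟩, hxS⟩

theorem Ioo_eq_Ioo_iff_of_lt {α : Type*} [LinearOrder α] [DenselyOrdered α] {a b c d : α}
    (hab : a < b) (h : Ioo a b = Ioo c d) : a = c ∧ b = d := by
  have hcd : c < d := nonempty_Ioo.1 (h ▸ nonempty_Ioo.2 hab)
  obtain ⟨hca, hbd⟩ := (Ioo_subset_Ioo_iff hab).1 h.subset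
  obtain ⟨hac, hdb⟩ := (Ioo_subset_Ioo_iff hcd).1 h.symm.subset
  exact ⟨le_antisymm hac hca, le_antisymm hbd hdb⟩

theorem mem_Ioo_div_iff_abs_sub_lt_one {x c : ℝ} (j : ℝ) (hc : 0 < c) :
    x ∈ Ioo ((j - 1) / c) ((j + 1) / c) ↔ |x * c - j| < 1 := by
  rw [mem_Ioo, div_lt_iff₀ hc, lt_div_iff₀ hc, abs_sub_lt_iff]
  constructor <;> rintro ⟨h₁, h₂⟩ <;> constructor <;> linarith

-- `j` is `t` rounded towards zero.
theorem exists_int_abs_lt_of_abs_lt (t : ℝ) {N : ℤ} (ht : |t| < N) :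
    ∃ j : ℤ, |j| < N ∧ |t - j| < 1 := by
  wlog h0 : 0 ≤ t generalizing t
  · obtain ⟨j, hjN, hj⟩ := this (-t) (by rwa [abs_neg]) (by linarith)
    refine ⟨-j, by rwa [abs_neg], ?_⟩
    rw [← abs_neg]
    push_cast
    convert hj using 2
    ring
  have hN : (0 : ℝ) < N := (abs_nonneg t).trans_lt ht
  refine ⟨⌊t⌋, abs_lt.2 ⟨?_, Int.floor_lt.2 (lt_of_abs_lt ht)⟩, abs_sub_lt_iff.2 ⟨?_, ?_⟩⟩
  · have : (0 : ℤ) ≤ ⌊t⌋ := Int.floor_nonneg.2 h0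
    have : (0 : ℤ) < N := by exact_mod_cast hN
    omega
  · linarith [Int.lt_floor_add_one t]
  · linarith [Int.floor_le t]

theorem Ulevel_subset_Ufam (n : ℕ) : Ulevel n ⊆ Ufam :=
  subset_iUnion Ulevel n

theorem Ulevel_finite (n : ℕ) : (Ulevel n).Finite := by
  refine ((finite_Ioo (-(3 : ℤ) ^ n) (3 ^ n)).image
    fun j : ℤ => Ioo (((j : ℝ) - 1) / 2 ^ n) (((j : ℝ) + 1) / 2 ^ n)).subset ?_
  rintro S ⟨j, hj₁, hj₂, rfl⟩
  exact ⟨j, ⟨hj₁, hj₂⟩, rfl⟩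

theorem Ulevel_pairwise_disjoint : Pairwise (Disjoint on Ulevel) := by
  intro n m hnm
  refine disjoint_left.2 ?_
  rintro S ⟨j, -, -, rfl⟩ ⟨j', -, -, hS⟩
  have hlt : ((j : ℝ) - 1) / 2 ^ n < ((j : ℝ) + 1) / 2 ^ n := by gcongr; linarith
  obtain ⟨hleft, hright⟩ := Ioo_eq_Ioo_iff_of_lt hlt hS
  have hlength : (2 : ℝ) / 2 ^ n = 2 / 2 ^ m := by
    calc (2 : ℝ) / 2 ^ n = ((j : ℝ) + 1) / 2 ^ n - ((j : ℝ) - 1) / 2 ^ n := by ring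
      _ = ((j' : ℝ) + 1) / 2 ^ m - ((j' : ℝ) - 1) / 2 ^ m := by rw [hleft, hright]
      _ = 2 / 2 ^ m := by ring
  have hpow : (2 : ℝ) ^ n = 2 ^ m := by
    rw [div_eq_div_iff (by positivity) (by positivity)] at hlength
    linarith
  exact hnm (pow_right_injective₀ two_pos (by norm_num) hpow)

theorem Ioo_subset_sUnion_Ulevel (n : ℕ) :
    Ioo (-((3 : ℝ) / 2) ^ n) (((3 : ℝ) / 2) ^ n) ⊆ ⋃₀ Ulevel n := by
  intro x hx
  have h2n : (0 : ℝ) < 2 ^ n := by positivity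
  have hscaled : |x * 2 ^ n| < (((3 : ℤ) ^ n : ℤ) : ℝ) := by
    rw [abs_mul, abs_of_pos h2n, Int.cast_pow, Int.cast_ofNat, ← lt_div_iff₀ h2n, ← div_pow]
    exact abs_lt.2 hx
  obtain ⟨j, hjN, hj⟩ := exists_int_abs_lt_of_abs_lt _ hscaled
  obtain ⟨hj₁, hj₂⟩ := abs_lt.1 hjN
  exact ⟨_, ⟨j, hj₁, hj₂, rfl⟩, (mem_Ioo_div_iff_abs_sub_lt_one _ h2n).2 hj⟩

theorem exists_Ulevel_cover_of_finite {F : Set ℝ} (hF : F.Finite) :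
    ∃ k, F ⊆ ⋃₀ Ulevel k := by
  obtain ⟨R, hR⟩ := (hF.image (|·|)).bddAbove
  obtain ⟨k, hk⟩ := pow_unbounded_of_one_lt R (by norm_num : (1 : ℝ) < 3 / 2)
  refine ⟨k, fun x hx => Ioo_subset_sUnion_Ulevel k (abs_lt.1 ?_)⟩
  exact (hR (mem_image_of_mem _ hx)).trans_lt hk

theorem sUnion_Ufam : ⋃₀ Ufam = univ := by
  refine eq_univ_of_forall fun x => ?_
  obtain ⟨k, hk⟩ := exists_Ulevel_cover_of_finite (finite_singleton x)
  exact sUnion_mono (Ulevel_subset_Ufam k) (hk rfl)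

theorem exists_Ioo_of_mem_Ufam {S : Set ℝ} (hS : S ∈ Ufam) :
    ∃ (n : ℕ) (j : ℤ), S = Ioo (((j : ℝ) - 1) / 2 ^ n) (((j : ℝ) + 1) / 2 ^ n) := by
  obtain ⟨n, j, -, -, rfl⟩ := mem_iUnion.1 hS
  exact ⟨n, j, rfl⟩

theorem isOpen_of_mem_Ufam {S : Set ℝ} (hS : S ∈ Ufam) : IsOpen S := by
  obtain ⟨n, j, rfl⟩ := exists_Ioo_of_mem_Ufam hS
  exact isOpen_Ioo

theorem univ_notMem_Ufam : univ ∉ Ufam := fun h => by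
  obtain ⟨n, j, hS⟩ := exists_Ioo_of_mem_Ufam h
  exact not_bddAbove_univ (hS ▸ bddAbove_Ioo)

theorem pair_not_subset_of_mem_Ufam {S : Set ℝ} (hS : S ∈ Ufam) : ¬ ({-1, 1} : Set ℝ) ⊆ S := by
  obtain ⟨n, j, rfl⟩ := exists_Ioo_of_mem_Ufam hS
  intro hsub
  have h2n : (0 : ℝ) < 2 ^ n := by positivity
  have hneg := (mem_Ioo_div_iff_abs_sub_lt_one _ h2n).1 (hsub (mem_insert _ _))
  have hpos := (mem_Ioo_div_iff_abs_sub_lt_one _ h2n).1 (hsub (mem_insert_of_mem _ rfl))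
  have h1n : (1 : ℝ) ≤ 2 ^ n := one_le_pow₀ (by norm_num)
  rw [abs_lt] at hneg hpos
  linarith [hneg.2, hpos.1]

theorem Ufam_weakly_groupable_not_omega_cover :
    -- `U` is an open cover of `ℝ` with `ℝ ∉ U`
    (∀ S ∈ Ufam, IsOpen S) ∧ ⋃₀ Ufam = Set.univ ∧ Set.univ ∉ Ufam ∧
    -- no single member of `U` contains `{-1, 1}`
    (¬ ∃ S ∈ Ufam, ({-1, 1} : Set ℝ) ⊆ S) ∧
    -- hence `U` is not an ω-cover
    (¬ ∀ F : Set ℝ, F.Finite → ∃ S ∈ Ufam, F ⊆ S) ∧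
    -- `(-(3/2)ⁿ, (3/2)ⁿ) ⊆ ⋃ Uₙ` for every `n`
    (∀ n : ℕ, Set.Ioo (-((3 : ℝ) / 2) ^ n) (((3 : ℝ) / 2) ^ n) ⊆ ⋃₀ Ulevel n) ∧
    -- `U` is weakly ω-groupable with respect to the ideal of finite sets
    (∃ φ : {S // S ∈ Ufam} → ℕ,
      (∀ k, {S : {S // S ∈ Ufam} | φ S = k}.Finite) ∧
      ∀ F : Set ℝ, F.Finite → ∃ k, F ⊆ ⋃₀ (Subtype.val '' {S | φ S = k})) := by
  have hpair : ¬ ∃ S ∈ Ufam, ({-1, 1} : Set ℝ) ⊆ S := fun ⟨S, hS, hsub⟩ =>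
    pair_not_subset_of_mem_Ufam hS hsub
  refine ⟨fun S => isOpen_of_mem_Ufam, sUnion_Ufam, univ_notMem_Ufam, hpair,
    fun hω => hpair (hω {-1, 1} (toFinite _)), Ioo_subset_sUnion_Ulevel, ?_⟩
  exact exists_finite_grouping_of_iUnion Ulevel Ulevel_finite Ulevel_pairwise_disjoint
    fun F hF => exists_Ulevel_cover_of_finite hF
end

section
/- Let U be the collection of all non-empty finite subsets of ω₁ (viewed as open sets in the discrete topology on ω₁). Then U is an [ω₁]^{<ω}-cover of ω₁ that is not ω-groupable: for every partition φ : U → ω₁ with all fibers finite, there is a finite set F ⊆ ω₁ and arbitrarily large ξ < ω₁ such that no member of φ⁻¹(ξ) contains F. -/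
/-- The ordinal `ω₁` realized as a type: the ordinals below `(ℵ₁).ord`. -/
def Omega1 : Type 1 := {o : Ordinal // o < (Cardinal.aleph 1).ord}

noncomputable instance : LinearOrder Omega1 := by unfold Omega1; infer_instance

/-- The collection of all non-empty finite subsets of `ω₁`. -/
def finCover : Set (Set Omega1) := {S | S.Finite ∧ S.Nonempty}

lemma nat_lt_omega1 (n : ℕ) : (n : Ordinal) < (Cardinal.aleph 1).ord :=
  lt_of_lt_of_le (Ordinal.nat_lt_omega0 n)
    (by rw [← Cardinal.ord_aleph0]; exact Cardinal.ord_le_ord.mpr (Cardinal.aleph0_le_aleph 1))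

noncomputable def natE : ℕ → Omega1 := fun n => ⟨n, nat_lt_omega1 n⟩

lemma natE_inj : Function.Injective natE := by
  intro a b h
  have : (a : Ordinal) = b := congrArg Subtype.val h
  exact_mod_cast this

lemma le_iff (a b : Omega1) : a ≤ b ↔ a.1 ≤ b.1 := Iff.rfl

theorem finCover_not_groupable :
    -- `U` is an `[ω₁]^{<ω}`-cover of the discrete space `ω₁`
    (∀ F : Set Omega1, F.Finite → ∃ S ∈ finCover, F ⊆ S) ∧
    ⋃₀ finCover = Set.univ ∧ Set.univ ∉ finCover ∧
    -- but `U` is not ω-groupable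
    ∀ φ : {S // S ∈ finCover} → Omega1,
      (∀ ξ, {S : {S // S ∈ finCover} | φ S = ξ}.Finite) →
      ∃ F : Set Omega1, F.Finite ∧
        ∀ ξ₀ : Omega1, ∃ ξ : Omega1, ξ₀ ≤ ξ ∧
          ∀ S : {S // S ∈ finCover}, φ S = ξ → ¬ F ⊆ (S : Set Omega1) := by
  have hinf : Function.Injective natE ∧ True := ⟨natE_inj, trivial⟩
  refine ⟨?_, ?_, ?_, ?_⟩
  · intro F hF
    exact ⟨insert (natE 0) F, ⟨hF.insert _, ⟨_, Set.mem_insert _ _⟩⟩, Set.subset_insert _ _⟩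
  · ext x
    simp only [Set.mem_sUnion, Set.mem_univ, iff_true]
    exact ⟨{x}, ⟨Set.finite_singleton x, ⟨x, rfl⟩⟩, rfl⟩
  · intro h
    exact (Set.infinite_of_injective_forall_mem natE_inj
      (fun n => Set.mem_univ (natE n))) h.1
  · intro φ hφ
    by_contra h
    push_neg at h
    choose g hg using fun n : ℕ => h {natE n} (Set.finite_singleton _)
    have hsup : iSup (fun n => (g n).1) < (Cardinal.aleph 1).ord := by
      apply Cardinal.iSup_lt_ord_of_isRegular Cardinal.isRegular_aleph_one
      · rw [Cardinal.mk_nat]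
        exact Cardinal.aleph0_lt_aleph_one
      · exact fun n => (g n).2
    set ξ : Omega1 := ⟨iSup (fun n => (g n).1), hsup⟩ with hξ
    have hle : ∀ n, g n ≤ ξ := fun n => (le_iff _ _).mpr (Ordinal.le_iSup _ n)
    have hmem : ∀ n : ℕ, natE n ∈ ⋃ S ∈ {S : {S // S ∈ finCover} | φ S = ξ}, (S : Set Omega1) := by
      intro n
      obtain ⟨S, hS, hFS⟩ := hg n ξ (hle n)
      exact Set.mem_biUnion hS (hFS rfl)
    have hfin : (⋃ S ∈ {S : {S // S ∈ finCover} | φ S = ξ}, (S : Set Omega1)).Finite :=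
      Set.Finite.biUnion (hφ ξ) (fun S _ => S.2.1)
    exact (Set.infinite_of_injective_forall_mem natE_inj hmem) hfin
end

section
/- Translation theorem for single-selection games (predetermined strategies case): Let A, B, C, D be collections, α an ordinal, and suppose for each ξ < α there are functions T1_ξ : B → A and T2_ξ : (⋃A) × B → ⋃B such that (i) x ∈ T1_ξ(B₀) implies T2_ξ(x, B₀) ∈ B₀, and (ii) whenever x_ξ ∈ T1_ξ(B_ξ) for all ξ < α and {x_ξ : ξ < α} ∈ C, then {T2_ξ(x_ξ, B_ξ) : ξ < α} ∈ D. Then if player One has a winning predetermined strategy in the single-selection game G₁^α(B, D), player One has a winning predetermined strategy in G₁^α(A, C). -/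
theorem translation_predetermined_single
    {M N : Type*} (𝒜 𝒞 : Set (Set M)) (ℬ 𝒟 : Set (Set N)) (α : Ordinal)
    -- the translation functions `T1_ξ : ℬ → 𝒜` and `T2_ξ : (⋃𝒜) × ℬ → ⋃ℬ`
    (T1 : {ξ : Ordinal // ξ < α} → Set N → Set M)
    (T2 : {ξ : Ordinal // ξ < α} → M → Set N → N)
    (hT1 : ∀ ξ, ∀ B ∈ ℬ, T1 ξ B ∈ 𝒜)
    -- (i) if `x ∈ T1_ξ(B₀)` then `T2_ξ(x, B₀) ∈ B₀`
    (h1 : ∀ ξ, ∀ B₀ ∈ ℬ, ∀ x ∈ T1 ξ B₀, T2 ξ x B₀ ∈ B₀)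
    -- (ii) if `x_ξ ∈ T1_ξ(B_ξ)` for all `ξ` and `{x_ξ : ξ < α} ∈ 𝒞`,
    --      then `{T2_ξ(x_ξ, B_ξ) : ξ < α} ∈ 𝒟`
    (h2 : ∀ (B : {ξ : Ordinal // ξ < α} → Set N) (x : {ξ : Ordinal // ξ < α} → M),
      (∀ ξ, B ξ ∈ ℬ) → (∀ ξ, x ξ ∈ T1 ξ (B ξ)) →
      Set.range x ∈ 𝒞 → Set.range (fun ξ => T2 ξ (x ξ) (B ξ)) ∈ 𝒟)
    -- One has a winning predetermined strategy in `G₁^α(ℬ, 𝒟)`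
    (σ : {ξ : Ordinal // ξ < α} → Set N) (hσ : ∀ ξ, σ ξ ∈ ℬ)
    (hσwin : ∀ y : {ξ : Ordinal // ξ < α} → N,
      (∀ ξ, y ξ ∈ σ ξ) → Set.range y ∉ 𝒟) :
    -- then One has a winning predetermined strategy in `G₁^α(𝒜, 𝒞)`
    ∃ s : {ξ : Ordinal // ξ < α} → Set M, (∀ ξ, s ξ ∈ 𝒜) ∧
      ∀ x : {ξ : Ordinal // ξ < α} → M,
        (∀ ξ, x ξ ∈ s ξ) → Set.range x ∉ 𝒞 := by
  refine ⟨fun ξ => T1 ξ (σ ξ), fun ξ => hT1 ξ _ (hσ ξ), fun x hx hC => ?_⟩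
  exact hσwin (fun ξ => T2 ξ (x ξ) (σ ξ)) (fun ξ => h1 ξ _ (hσ ξ) _ (hx ξ))
    (h2 σ x hσ hx hC)
end

section
/- Translation theorem for finite-selection games (Markov strategy case): Let A, B, C, D be collections, α an ordinal, and suppose for each ξ < α there are functions T1_ξ : B → A and T2_ξ : [⋃A]^{<ω} × B → [⋃B]^{<ω} such that (i) if 𝓕 is a finite subset of T1_ξ(B₀), then T2_ξ(𝓕, B₀) is a finite subset of B₀, and (ii) if 𝓕_ξ is a finite subset of T1_ξ(B_ξ) for each ξ < α and ⋃_ξ 𝓕_ξ ∈ C, then ⋃_ξ T2_ξ(𝓕_ξ, B_ξ) ∈ D. Then if Two has a winning Markov strategy in G_fin^α(A, C), Two has a winning Markov strategy in G_fin^α(B, D). -/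
theorem translation_markov_finite
    {M N : Type*} (𝒜 𝒞 : Set (Set M)) (ℬ 𝒟 : Set (Set N)) (α : Ordinal)
    -- the translation functions `T1_ξ : ℬ → 𝒜` and `T2_ξ : [⋃𝒜]^{<ω} × ℬ → [⋃ℬ]^{<ω}`
    (T1 : {ξ : Ordinal // ξ < α} → Set N → Set M)
    (T2 : {ξ : Ordinal // ξ < α} → Finset M → Set N → Finset N)
    (hT1 : ∀ ξ, ∀ B ∈ ℬ, T1 ξ B ∈ 𝒜)
    -- (i) if `𝓕` is a finite subset of `T1_ξ(B₀)`, then `T2_ξ(𝓕, B₀)` is a finite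
    --     subset of `B₀`
    (h1 : ∀ ξ, ∀ B₀ ∈ ℬ, ∀ 𝓕 : Finset M, ↑𝓕 ⊆ T1 ξ B₀ → ↑(T2 ξ 𝓕 B₀) ⊆ B₀)
    -- (ii) if `𝓕_ξ ⊆ T1_ξ(B_ξ)` for each `ξ` and `⋃_ξ 𝓕_ξ ∈ 𝒞`,
    --      then `⋃_ξ T2_ξ(𝓕_ξ, B_ξ) ∈ 𝒟`
    (h2 : ∀ (B : {ξ : Ordinal // ξ < α} → Set N)
        (𝓕 : {ξ : Ordinal // ξ < α} → Finset M),
      (∀ ξ, B ξ ∈ ℬ) → (∀ ξ, ↑(𝓕 ξ) ⊆ T1 ξ (B ξ)) →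
      (⋃ ξ, (↑(𝓕 ξ) : Set M)) ∈ 𝒞 →
      (⋃ ξ, (↑(T2 ξ (𝓕 ξ) (B ξ)) : Set N)) ∈ 𝒟)
    -- Two has a winning Markov strategy in `G_fin^α(𝒜, 𝒞)`
    (τ : Set M → {ξ : Ordinal // ξ < α} → Finset M)
    (hτ : ∀ A ∈ 𝒜, ∀ ξ, ↑(τ A ξ) ⊆ A)
    (hτwin : ∀ A : {ξ : Ordinal // ξ < α} → Set M, (∀ ξ, A ξ ∈ 𝒜) →
      (⋃ ξ, (↑(τ (A ξ) ξ) : Set M)) ∈ 𝒞) :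
    -- then Two has a winning Markov strategy in `G_fin^α(ℬ, 𝒟)`
    ∃ t : Set N → {ξ : Ordinal // ξ < α} → Finset N,
      (∀ B ∈ ℬ, ∀ ξ, ↑(t B ξ) ⊆ B) ∧
      ∀ B : {ξ : Ordinal // ξ < α} → Set N, (∀ ξ, B ξ ∈ ℬ) →
        (⋃ ξ, (↑(t (B ξ) ξ) : Set N)) ∈ 𝒟 := by
  classical
  refine ⟨fun B ξ => if B ∈ ℬ then T2 ξ (τ (T1 ξ B) ξ) B else ∅, ?_, ?_⟩
  · intro B hB ξ
    simp only [if_pos hB]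
    exact h1 ξ B hB _ (hτ _ (hT1 ξ B hB) ξ)
  · intro B hB
    have : ∀ ξ, (if B ξ ∈ ℬ then T2 ξ (τ (T1 ξ (B ξ)) ξ) (B ξ) else ∅)
        = T2 ξ (τ (T1 ξ (B ξ)) ξ) (B ξ) := fun ξ => if_pos (hB ξ)
    simp only [this]
    exact h2 B (fun ξ => τ (T1 ξ (B ξ)) ξ) hB
      (fun ξ => hτ _ (hT1 ξ _ (hB ξ)) ξ)
      (hτwin (fun ξ => T1 ξ (B ξ)) (fun ξ => hT1 ξ _ (hB ξ)))
end
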